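/- arXiv:2112.04965 — 10 statements merged into one kernel-verified Lean document; each statement's English description precedes it below -/
import Mathlib

section
/- For all integers n ≥ 1 and m ≥ 1, the player can win the (n, m) rotation game if and only if n = 1, or m = 1, or there exist a prime p and positive integers a, b with n = p^a and m = p^b. -/
/-- The state of the (n, m) rotation game after `k` turns: `s₀` is the initial
configuration, `y k` is the move added on turn `k+1`, and `r k` is the rotation
applied after that move. -/
def rotState {n m : ℕ} (y : ℕ → Fin n → ZMod m) (r : ℕ → Fin n)
    (s₀ : Fin n → ZMod m) : ℕ → Fin n → ZMod m
  | 0 => s₀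
  | k + 1 => fun i => (rotState y r s₀ k + y k) (i + r k)

/-- The first `N` moves of `y` form a winning sequence for the (n, m) rotation game. -/
def RotWinning (n m N : ℕ) (y : ℕ → Fin n → ZMod m) : Prop :=
  ∀ (s₀ : Fin n → ZMod m) (r : ℕ → Fin n), ∃ k ≤ N, rotState y r s₀ k = 0

/-- The player can win the (n, m) rotation game. -/
def RotCanWin (n m : ℕ) : Prop := ∃ N y, RotWinning n m N y

/-!
Read a configuration as an element of the group ring `(ZMod m)[Fin n]`; rotating by `t` is then
multiplication by the unit `single (-t) 1`. If `n = p ^ a` and `m = p ^ b`, every `single t 1 - 1`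
is nilpotent, so along the filtration by powers of the nilradical each rotation acts trivially on
every layer. On such a layer the adversary is powerless modulo the layer below: the player tries
every coset representative in turn, following each try by a sequence that clears the layer below.

Conversely, for distinct primes `q ∣ n` and `p ∣ m` the game maps onto the `(q, p)` game, where
`q` is invertible. There `rot 1 x - x` sums to `0`, so it is rotation invariant only when it is
`0`; hence whenever `x` is non-constant, one of `x` and `rot 1 x` stays non-constant after adding
any vector. The adversary uses this to keep state plus next move non-constant, so the state is
never `0`.
-/

namespace RotationGame

open Function

section Game

variable {ι M : Type*}

/-- `Forces ρ l P s`: whatever indices `i` the adversary chooses, the play that starts at `s`,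
adds the moves of `l` one at a time and applies `ρ i` after each move either passes through
the state `0` or ends in a state satisfying `P`. -/
def Forces [Zero M] [Add M] (ρ : ι → M → M) : List M → (M → Prop) → M → Prop
  | [], P, s => P s
  | y :: l, P, s => s = 0 ∨ ∀ i, Forces ρ l P (ρ i (s + y))

def CanWin [Zero M] [Add M] (ρ : ι → M → M) : Prop :=
  ∃ l : List M, ∀ s, Forces ρ l (· = 0) s

section Basic

variable [Zero M] [Add M] {ρ : ι → M → M} {P Q : M → Prop}

theorem forces_append {l₁ l₂ : List M} {s : M} :
    Forces ρ (l₁ ++ l₂) P s ↔ Forces ρ l₁ (Forces ρ l₂ P) s := by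
  induction l₁ generalizing s with
  | nil => rfl
  | cons y l ih => simp only [List.cons_append, Forces, ih]

theorem Forces.mono {l : List M} {s : M} (hPQ : ∀ s, P s → Q s) (h : Forces ρ l P s) :
    Forces ρ l Q s := by
  induction l generalizing s with
  | nil => exact hPQ s h
  | cons y l ih => exact h.imp id fun h i => ih (h i)

theorem forces_zero {l : List M} (hP : P 0) : Forces ρ l P 0 := by
  cases l with
  | nil => exact hP
  | cons y l => exact Or.inl rfl

end Basic

theorem Forces.map {κ N : Type*} [AddZeroClass M] [AddZeroClass N] {ρ : ι → M → M}
    {ρ' : κ → N → N} (f : M →+ N) {σ : ι → κ} (hσ : Surjective σ)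
    (hf : ∀ i x, f (ρ i x) = ρ' (σ i) (f x)) {l : List M} {s : M}
    (h : Forces ρ l (· = 0) s) : Forces ρ' (l.map f) (· = 0) (f s) := by
  induction l generalizing s with
  | nil => exact (congrArg f h).trans f.map_zero
  | cons y l ih =>
    refine h.imp (fun hs => by rw [hs, map_zero]) fun h j => ?_
    obtain ⟨i, rfl⟩ := hσ j
    simpa only [hf, map_add] using ih (h i)

theorem CanWin.map {κ N : Type*} [AddZeroClass M] [AddZeroClass N] {ρ : ι → M → M}
    {ρ' : κ → N → N} (h : CanWin ρ) (f : M →+ N) (hfs : Surjective f) {σ : ι → κ}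
    (hσ : Surjective σ) (hf : ∀ i x, f (ρ i x) = ρ' (σ i) (f x)) : CanWin ρ' := by
  obtain ⟨l, hl⟩ := h
  refine ⟨l.map f, fun s' => ?_⟩
  obtain ⟨s, rfl⟩ := hfs s'
  exact (hl s).map f hσ hf

end Game

section Filtration

variable {ι M : Type*} [AddCommGroup M] {ρ : ι → M → M}

def CanClear (ρ : ι → M → M) (S : AddSubgroup M) : Prop :=
  ∃ l : List M, (∀ y ∈ l, y ∈ S) ∧ ∀ s ∈ S, Forces ρ l (· = 0) s

theorem canClear_bot : CanClear ρ ⊥ :=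
  ⟨[], by simp, fun _ hs => AddSubgroup.mem_bot.1 hs⟩

theorem CanClear.canWin (h : CanClear ρ ⊤) : CanWin ρ :=
  let ⟨l, _, hl⟩ := h
  ⟨l, fun s => hl s trivial⟩

section Layer

variable {S T : AddSubgroup M} (hρ : ∀ x ∈ S, ∀ i, ρ i x - x ∈ T)
include hρ

theorem forces_sub_mem (hTS : T ≤ S) {W : List M} (hW : ∀ w ∈ W, w ∈ T) {s : M}
    (hs : s ∈ S) : Forces ρ W (· - s ∈ T) s := by
  induction W generalizing s with
  | nil => simp [Forces]
  | cons w W ih =>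
    refine Or.inr fun i => ?_
    have hw : w ∈ T := hW w List.mem_cons_self
    have hsw : ρ i (s + w) - (s + w) ∈ T := hρ _ (S.add_mem hs (hTS hw)) i
    have hS : ρ i (s + w) ∈ S := by
      simpa using S.add_mem (hTS hsw) (S.add_mem hs (hTS hw))
    refine (ih (fun v hv => hW v (List.mem_cons_of_mem w hv)) hS).mono fun s' hs' => ?_
    have key : s' - s = (s' - ρ i (s + w)) + (ρ i (s + w) - (s + w)) + w := by abel
    rw [key]
    exact T.add_mem (T.add_mem hs' hsw) hw

/-- The moves `c - a₁, W, a₁ - a₂, W, …`: after the `j`-th block the state is `s + c - aⱼ`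
modulo `T`, and `W` clears it once that lies in `T`. -/
theorem exists_forces_of_exists_sub_mem (hTS : T ≤ S) {W : List M} (hWT : ∀ w ∈ W, w ∈ T)
    (hW : ∀ s ∈ T, Forces ρ W (· = 0) s) (as : List M) (has : ∀ a ∈ as, a ∈ S) (c : M)
    (hc : c ∈ S) : ∃ l : List M, (∀ y ∈ l, y ∈ S) ∧
      ∀ s ∈ S, (∃ a ∈ as, s + c - a ∈ T) → Forces ρ l (· = 0) s := by
  induction as generalizing c with
  | nil => exact ⟨[], by simp, by simp⟩
  | cons a as ih =>
    have ha : a ∈ S := has a List.mem_cons_self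
    obtain ⟨V, hVS, hV⟩ := ih (fun b hb => has b (List.mem_cons_of_mem a hb)) a ha
    refine ⟨(c - a) :: (W ++ V), ?_, ?_⟩
    · simp only [List.mem_cons, List.mem_append]
      rintro y (rfl | hy | hy)
      exacts [S.sub_mem hc ha, hTS (hWT y hy), hVS y hy]
    rintro s hs ⟨b, hb, hsb⟩
    refine Or.inr fun i => forces_append.2 ?_
    set s₁ := ρ i (s + (c - a))
    have hs₁ : s₁ - (s + (c - a)) ∈ T := hρ _ (S.add_mem hs (S.sub_mem hc ha)) i
    rcases List.mem_cons.1 hb with rfl | hb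
    · have hs₁T : s₁ ∈ T := by
        simpa [add_sub_assoc] using T.add_mem hs₁ hsb
      exact (hW s₁ hs₁T).mono fun s' (hs' : s' = 0) => by
        subst hs'; exact forces_zero rfl
    · have hs₁S : s₁ ∈ S := by
        simpa using S.add_mem (hTS hs₁) (S.add_mem hs (S.sub_mem hc ha))
      refine (forces_sub_mem hρ hTS hWT hs₁S).mono fun s' hs' => hV s' ?_ ⟨b, hb, ?_⟩
      · simpa using S.add_mem (hTS hs') hs₁S
      · have key : s' + a - b = (s' - s₁) + (s₁ - (s + (c - a))) + (s + c - b) := by abel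
        rw [key]
        exact T.add_mem (T.add_mem hs' hs₁) hsb

theorem CanClear.of_le [Finite M] (hTS : T ≤ S) (hT : CanClear ρ T) : CanClear ρ S := by
  obtain ⟨W, hWT, hW⟩ := hT
  obtain ⟨l, hlS, hl⟩ := exists_forces_of_exists_sub_mem hρ hTS hWT hW
    (Set.toFinite (S : Set M)).toFinset.toList (by simp) 0 S.zero_mem
  exact ⟨l, hlS, fun s hs => hl s hs ⟨s, by simpa using hs, by simp⟩⟩

end Layer

theorem canClear_of_filtration [Finite M] {F : ℕ → AddSubgroup M} (hF : ∀ k, F (k + 1) ≤ F k)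
    (hρ : ∀ k, ∀ x ∈ F k, ∀ i, ρ i x - x ∈ F (k + 1)) {L : ℕ} (hL : F L = ⊥) :
    CanClear ρ (F 0) := by
  induction L generalizing F with
  | zero => exact hL ▸ canClear_bot
  | succ L ih => exact (ih (fun k => hF (k + 1)) (fun k => hρ (k + 1)) hL).of_le (hρ 0) (hF 0)

theorem canWin_smul {A : Type*} [CommRing A] [Module A M] [Finite M] {I : Ideal A}
    (hI : IsNilpotent I) (u : ι → A) (hu : ∀ i, u i - 1 ∈ I) :
    CanWin (fun i (x : M) => u i • x) := by
  obtain ⟨L, hL⟩ := hI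
  have hclear := canClear_of_filtration (ρ := fun i (x : M) => u i • x)
    (F := fun k => (I ^ k • (⊤ : Submodule A M)).toAddSubgroup)
    (fun k => Submodule.smul_mono_left (Ideal.pow_le_pow_right k.le_succ))
    (fun k x hx i => by
      have : (u i - 1) • x ∈ I ^ (k + 1) • (⊤ : Submodule A M) := by
        rw [pow_succ', Submodule.mul_smul]
        exact Submodule.smul_mem_smul (hu i) hx
      simpa [sub_smul] using this)
    (L := L) (by simp [hL])
  rw [pow_zero, Ideal.one_eq_top, Submodule.top_smul, Submodule.top_toAddSubgroup] at hclear
  exact hclear.canWin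

end Filtration

section Rotation

variable {G R : Type*}

def rot [Add G] (t : G) (x : G → R) : G → R := fun i => x (i + t)

@[simp] theorem rot_apply [Add G] (t : G) (x : G → R) (i : G) : rot t x i = x (i + t) := rfl

theorem rot_add [Add G] [Add R] (t : G) (x y : G → R) : rot t (x + y) = rot t x + rot t y := rfl

theorem rot_eq_zero_iff [AddGroup G] [Zero R] {t : G} {x : G → R} : rot t x = 0 ↔ x = 0 :=
  ⟨fun h => funext fun i => by simpa using congrFun h (i - t), fun h => by rw [h]; rfl⟩

theorem rotState_succ' {n m : ℕ} (y : ℕ → Fin n → ZMod m) (r : ℕ → Fin n) (s₀ : Fin n → ZMod m)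
    (k : ℕ) : rotState y r s₀ (k + 1) =
      rotState (fun j => y (j + 1)) (fun j => r (j + 1)) (rot (r 0) (s₀ + y 0)) k := by
  induction k with
  | zero => rfl
  | succ k ih => exact congrArg (fun s => rot (r (k + 1)) (s + y (k + 1))) ih

theorem forall_exists_rotState_eq_zero_iff {n m : ℕ} [NeZero n] (N : ℕ)
    (y : ℕ → Fin n → ZMod m) (s₀ : Fin n → ZMod m) :
    (∀ r, ∃ k ≤ N, rotState y r s₀ k = 0) ↔ Forces rot ((List.range N).map y) (· = 0) s₀ := by
  induction N generalizing y s₀ with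
  | zero => simp [Forces, rotState]
  | succ N ih =>
    simp only [List.range_succ_eq_map, List.map_cons, List.map_map, Forces, ← ih]
    constructor
    · intro h
      refine or_iff_not_imp_left.2 fun hs i r => ?_
      obtain ⟨_ | k, hk, hr⟩ := h (Stream'.cons i r)
      · exact absurd hr hs
      · exact ⟨k, by omega, (rotState_succ' y (Stream'.cons i r) s₀ k).symm.trans hr⟩
    · rintro (hs | h) r
      · exact ⟨0, Nat.zero_le _, hs⟩
      · obtain ⟨k, hk, hr⟩ := h (r 0) (fun j => r (j + 1))
        exact ⟨k + 1, by omega, by rw [rotState_succ']; exact hr⟩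

theorem rotCanWin_iff_canWin {n m : ℕ} [NeZero n] :
    RotCanWin n m ↔ CanWin (rot : Fin n → (Fin n → ZMod m) → Fin n → ZMod m) := by
  constructor
  · rintro ⟨N, y, hy⟩
    exact ⟨_, fun s => (forall_exists_rotState_eq_zero_iff N y s).1 (hy s)⟩
  · rintro ⟨l, hl⟩
    refine ⟨l.length, (l.getD · 0), fun s => (forall_exists_rotState_eq_zero_iff _ _ s).2 ?_⟩
    convert hl s
    apply List.ext_getElem <;> simp +contextual

end Rotation

section GroupRing

open AddMonoidAlgebra

variable {G R : Type*} [CommRing R] [AddCommGroup G] [Finite G]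

noncomputable def coeffEquiv : R[G] ≃+ (G → R) :=
  AddMonoidAlgebra.coeffAddEquiv.trans Finsupp.addEquivFunOnFinite

theorem coeffEquiv_single_mul (t : G) (f : R[G]) :
    coeffEquiv (single (-t) 1 * f) = rot t (coeffEquiv f) := by
  funext i
  change (single (-t) 1 * f).coeff i = f.coeff (i + t)
  rw [coeff_single_mul_apply, neg_neg, one_mul, add_comm]

theorem canWin_rot_of_isNilpotent [Finite R] (h : ∀ t : G, IsNilpotent (single t (1 : R) - 1)) :
    CanWin (rot : G → (G → R) → G → R) := by
  let e : R[G] ≃+ (G → R) := coeffEquiv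
  have : Finite R[G] := Finite.of_equiv _ e.symm.toEquiv
  exact (canWin_smul IsArtinianRing.isNilpotent_nilradical (fun t => single (-t) 1)
    fun t => mem_nilradical.2 (h (-t))).map e.toAddMonoidHom e.surjective surjective_id
    fun t f => coeffEquiv_single_mul t f

end GroupRing

open AddMonoidAlgebra Fin.CommRing in
/-- With `g` the generator, `(1 + (g - 1)) ^ p ^ a = 1` puts `(g - 1) ^ p ^ a` in `(p)`, and `p`
is nilpotent. -/
theorem isNilpotent_single_sub_one {p a b : ℕ} [NeZero (p ^ a)] (hp : p.Prime)
    (t : Fin (p ^ a)) : IsNilpotent (single t (1 : ZMod (p ^ b)) - 1) := by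
  set g : (ZMod (p ^ b))[Fin (p ^ a)] := single 1 1
  have hg_pow : ∀ k : ℕ, g ^ k = single (k : Fin (p ^ a)) 1 := by
    intro k; simp [g, single_pow, nsmul_eq_mul]
  have hp_nil : IsNilpotent (p : (ZMod (p ^ b))[Fin (p ^ a)]) :=
    ⟨b, by rw [← Nat.cast_pow, ← map_natCast (algebraMap (ZMod (p ^ b)) _), ZMod.natCast_self,
      map_zero]⟩
  have hg : IsNilpotent (g - 1) := by
    obtain ⟨r, hr⟩ := exists_add_pow_prime_pow_eq hp 1 (g - 1) a
    rw [add_sub_cancel, hg_pow, Fin.natCast_self, ← one_def, one_pow] at hr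
    have : (g - 1) ^ p ^ a = p * (-(g - 1) * r) := by linear_combination -hr
    exact IsNilpotent.of_pow (this ▸ (Commute.all _ _).isNilpotent_mul_right hp_nil)
  obtain ⟨c, hc⟩ := sub_one_dvd_pow_sub_one g t.val
  rw [← Fin.cast_val_eq_self t, ← hg_pow, hc]
  exact (Commute.all _ _).isNilpotent_mul_right hg

section Quotient

variable {G R : Type*}

theorem CanWin.rot_mapCoeff {S : Type*} [Add G] [AddZeroClass R] [AddZeroClass S]
    (h : CanWin (rot : G → (G → R) → G → R)) (φ : R →+ S) (hφ : Surjective φ) :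
    CanWin (rot : G → (G → S) → G → S) :=
  h.map (φ.compLeft G) hφ.comp_left surjective_id fun _ _ => rfl

variable {H : Type*} [Fintype G] [DecidableEq H] [AddCommMonoid R]

def fiberSum (π : G → H) : (G → R) →+ (H → R) where
  toFun x j := ∑ i with π i = j, x i
  map_zero' := by ext; simp
  map_add' x y := by ext; simp [Finset.sum_add_distrib]

theorem fiberSum_rot [AddGroup G] [AddGroup H] (π : G →+ H) (t : G) (x : G → R) :
    fiberSum π (rot t x) = rot (π t) (fiberSum π x) := by
  ext j
  refine Finset.sum_equiv (Equiv.addRight t) (fun i => by simp) fun _ _ => rfl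

theorem fiberSum_surjective {π : G → H} (hπ : Surjective π) :
    Surjective (fiberSum π : (G → R) →+ (H → R)) := by
  classical
  intro u
  refine ⟨fun i => if i = surjInv hπ (π i) then u (π i) else 0, funext fun j => ?_⟩
  change ∑ i with π i = j, _ = u j
  rw [Finset.sum_congr rfl fun i hi => by rw [(Finset.mem_filter.1 hi).2], Finset.sum_ite_eq']
  simp [surjInv_eq hπ]

theorem CanWin.rot_fiberSum [AddGroup G] [AddGroup H] (h : CanWin (rot : G → (G → R) → G → R))
    (π : G →+ H) (hπ : Surjective π) : CanWin (rot : H → (H → R) → H → R) :=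
  h.map (fiberSum π) (fiberSum_surjective hπ) hπ (fiberSum_rot π)

end Quotient

def finModHom {n q : ℕ} [NeZero n] [NeZero q] (h : q ∣ n) : Fin n →+ Fin q where
  toFun i := Fin.ofNat q i
  map_zero' := by ext; simp
  map_add' i j := by ext; simp [Fin.val_add, Nat.mod_mod_of_dvd _ h, Nat.add_mod]

theorem finModHom_surjective {n q : ℕ} [NeZero n] [NeZero q] (h : q ∣ n) :
    Surjective (finModHom h) := fun j =>
  ⟨Fin.castLE (Nat.le_of_dvd (NeZero.pos n) h) j, by ext; simp [finModHom]⟩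

section Necessity

variable {q : ℕ} [NeZero q] {R : Type*}

open Fin.NatCast in
theorem apply_eq_apply_zero_of_rot_one_eq {z : Fin q → R} (h : rot 1 z = z) (i : Fin q) :
    z i = z 0 := by
  have : ∀ k : ℕ, z k = z 0 := by
    intro k
    induction k with
    | zero => simp
    | succ k ih => rw [Nat.cast_succ, ← ih]; exact congrFun h k
  simpa using this i

theorem sum_rot_one_sub [AddCommGroup R] (x : Fin q → R) : ∑ i, (rot 1 x - x) i = 0 := by
  simp only [Pi.sub_apply, rot_apply, Finset.sum_sub_distrib]
  exact sub_eq_zero.2 (Equiv.sum_comp (Equiv.addRight 1) x)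

variable [CommRing R]

theorem rot_one_eq_of_rot_one_sub_eq (hq : IsUnit (q : R)) {x : Fin q → R}
    (h : rot 1 (rot 1 x - x) = rot 1 x - x) : rot 1 x = x := by
  have hconst := apply_eq_apply_zero_of_rot_one_eq h
  have hd0 : (rot 1 x - x) 0 = 0 := by
    have hsum := sum_rot_one_sub x
    rw [Finset.sum_congr rfl fun i _ => hconst i, Finset.sum_const, Finset.card_univ,
      Fintype.card_fin, nsmul_eq_mul] at hsum
    exact hq.mul_right_eq_zero.1 hsum
  exact sub_eq_zero.1 (funext fun i => (hconst i).trans hd0)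

theorem exists_rot_one_ne (hq : IsUnit (q : R)) {x : Fin q → R} (hx : rot 1 x ≠ x)
    (y : Fin q → R) : ∃ t, rot 1 (rot t x + y) ≠ rot t x + y := by
  by_contra! h
  refine hx (rot_one_eq_of_rot_one_sub_eq hq (funext fun i => ?_))
  have h₀ := congrFun (h 0) i
  have h₁ := congrFun (h 1) i
  simp only [rot_apply, Pi.add_apply, Pi.sub_apply, add_zero] at h₀ h₁ ⊢
  linear_combination h₁ - h₀

theorem not_forces_of_rot_one_ne (hq : IsUnit (q : R)) (l : List (Fin q → R)) {s : Fin q → R}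
    (hs : s ≠ 0) (hsl : rot 1 (s + l.headD 0) ≠ s + l.headD 0) : ¬ Forces rot l (· = 0) s := by
  induction l generalizing s with
  | nil => exact hs
  | cons y l ih =>
    rintro (h | h)
    · exact hs h
    obtain ⟨t, ht⟩ := exists_rot_one_ne hq hsl (l.headD 0)
    refine ih (fun h₀ => hsl ?_) ht (h t)
    rw [rot_eq_zero_iff.1 h₀]
    rfl

theorem not_canWin_rot [Nontrivial R] (hq : IsUnit (q : R)) (hq₁ : q ≠ 1) :
    ¬ CanWin (rot : Fin q → (Fin q → R) → Fin q → R) := by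
  rintro ⟨l, hl⟩
  by_cases hy : rot 1 (l.headD 0) = l.headD 0
  · refine not_forces_of_rot_one_ne hq l (s := Pi.single 0 1) (by simp) (fun h => ?_) (hl _)
    rw [rot_add, hy] at h
    have := congrFun (add_right_cancel h) 0
    simp [Fin.one_eq_zero_iff, hq₁] at this
  · refine not_forces_of_rot_one_ne hq l one_ne_zero (fun h => hy (funext fun i => ?_)) (hl 1)
    simpa using congrFun h i

end Necessity

theorem exists_prime_pow_of_forall_prime_dvd_eq {n m : ℕ} (hn₀ : n ≠ 0) (hn₁ : n ≠ 1)
    (hm₀ : m ≠ 0) (hm₁ : m ≠ 1) (h : ∀ q p, q.Prime → p.Prime → q ∣ n → p ∣ m → q = p) :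
    ∃ p a b : ℕ, p.Prime ∧ 0 < a ∧ 0 < b ∧ n = p ^ a ∧ m = p ^ b := by
  have hp := Nat.minFac_prime hm₁
  have hq := Nat.minFac_prime hn₁
  have hqp := h _ _ hq hp n.minFac_dvd m.minFac_dvd
  have hn := Nat.eq_prime_pow_of_unique_prime_dvd hn₀ fun hd hdn => h _ _ hd hp hdn m.minFac_dvd
  have hm := Nat.eq_prime_pow_of_unique_prime_dvd hm₀ fun hd hdm =>
    (h _ _ hq hd n.minFac_dvd hdm).symm.trans hqp
  refine ⟨_, _, _, hp, Nat.pos_of_ne_zero fun h₀ => hn₁ ?_, Nat.pos_of_ne_zero fun h₀ => hm₁ ?_,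
    hn, hm⟩
  · rw [hn, h₀, pow_zero]
  · rw [hm, h₀, pow_zero]

end RotationGame

open RotationGame in
theorem rotation_game_characterization (n m : ℕ) (hn : 1 ≤ n) (hm : 1 ≤ m) :
    RotCanWin n m ↔
      n = 1 ∨ m = 1 ∨
        ∃ p a b : ℕ, p.Prime ∧ 0 < a ∧ 0 < b ∧ n = p ^ a ∧ m = p ^ b := by
  have : NeZero n := ⟨by omega⟩
  have : NeZero m := ⟨by omega⟩
  rw [rotCanWin_iff_canWin]
  constructor
  · intro hwin
    by_contra hne
    simp only [not_or] at hne
    obtain ⟨hn₁, hm₁, hpow⟩ := hne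
    obtain ⟨q, p, hq, hp, hqn, hpm, hqp⟩ : ∃ q p, q.Prime ∧ p.Prime ∧ q ∣ n ∧ p ∣ m ∧ q ≠ p := by
      by_contra! h
      exact hpow (exists_prime_pow_of_forall_prime_dvd_eq (by omega) hn₁ (by omega) hm₁ h)
    have : NeZero q := ⟨hq.ne_zero⟩
    have : Fact (1 < p) := ⟨hp.one_lt⟩
    refine not_canWin_rot ((ZMod.isUnit_iff_coprime q p).2 ((Nat.coprime_primes hq hp).2 hqp))
      hq.one_lt.ne' ?_
    exact (hwin.rot_fiberSum (finModHom hqn) (finModHom_surjective hqn)).rot_mapCoeff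
      (ZMod.castHom hpm (ZMod p)).toAddMonoidHom (ZMod.ringHom_surjective _)
  · rintro (rfl | rfl | ⟨p, a, b, hp, -, -, rfl, rfl⟩)
    · exact canWin_rot_of_isNilpotent fun t => by
        simp [Subsingleton.elim t 0, AddMonoidAlgebra.one_def]
    · exact ⟨[], fun s => Subsingleton.elim s 0⟩
    · exact canWin_rot_of_isNilpotent (isNilpotent_single_sub_one hp)
end

section
/- For distinct primes p and q, the player cannot win the (p, q) rotation game: no winning sequence of moves exists when n = p and m = q. -/
def rotate {n m : ℕ} (r : Fin n) (x : Fin n → ZMod m) : Fin n → ZMod m := fun i => x (i + r)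

lemma rotState_succ {n m : ℕ} (y : ℕ → Fin n → ZMod m) (r : ℕ → Fin n) (s₀ : Fin n → ZMod m)
    (k : ℕ) : rotState y r s₀ (k + 1) = rotate (r k) (rotState y r s₀ k + y k) :=
  rfl

lemma exists_rotState_mem {n m : ℕ} (y : ℕ → Fin n → ZMod m) (S : ℕ → Set (Fin n → ZMod m))
    (hS₀ : (S 0).Nonempty) (hS : ∀ k, ∀ s ∈ S k, ∃ r, rotate r (s + y k) ∈ S (k + 1)) :
    ∃ s₀ r, ∀ k, rotState y r s₀ k ∈ S k := by
  obtain ⟨s₀, hs₀⟩ := hS₀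
  have : Nonempty (Fin n) := ⟨(hS 0 s₀ hs₀).choose⟩
  choose! σ hσ using hS
  let t : ℕ → Fin n → ZMod m := fun k => Nat.rec s₀ (fun k s => rotate (σ k s) (s + y k)) k
  have ht : ∀ k, t k ∈ S k := by
    intro k
    induction k with
    | zero => exact hs₀
    | succ k ih => exact hσ k (t k) ih
  have hrot : ∀ k, rotState y (fun k => σ k (t k)) s₀ k = t k := by
    intro k
    induction k with
    | zero => rfl
    | succ k ih => rw [rotState_succ, ih]
  exact ⟨s₀, fun k => σ k (t k), fun k => hrot k ▸ ht k⟩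

section RootEval

variable {n m : ℕ} {K : Type*} [CommRing K] [Algebra (ZMod m) K]

def rootEval (ζ : K) (x : Fin n → ZMod m) : K :=
  ∑ i, algebraMap (ZMod m) K (x i) * ζ ^ (i : ℕ)

@[simp]
lemma rootEval_zero (ζ : K) : rootEval ζ (0 : Fin n → ZMod m) = 0 := by
  simp [rootEval]

lemma rootEval_add (ζ : K) (x x' : Fin n → ZMod m) :
    rootEval ζ (x + x') = rootEval ζ x + rootEval ζ x' := by
  simp [rootEval, add_mul, Finset.sum_add_distrib]

lemma rootEval_single_zero [NeZero n] (ζ : K) :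
    rootEval ζ (Pi.single (0 : Fin n) (1 : ZMod m)) = 1 := by
  rw [rootEval, Finset.sum_eq_single (0 : Fin n)] <;> simp +contextual

lemma rootEval_eq_pow_mul_rootEval_rotate [NeZero n] {ζ : K} (hζ : ζ ^ n = 1) (r : Fin n)
    (x : Fin n → ZMod m) : rootEval ζ x = ζ ^ (r : ℕ) * rootEval ζ (rotate r x) := by
  rw [rootEval, rootEval, Finset.mul_sum]
  refine (Fintype.sum_equiv (Equiv.addRight r) _ _ fun i => ?_).symm
  rw [Equiv.coe_addRight, rotate, Fin.val_add, ← pow_eq_pow_mod _ hζ, pow_add]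
  ring

variable [IsDomain K]

lemma exists_rotate_rootEval_ne {ζ : K} (hζ : ζ ^ n = 1) (hζ₁ : ζ ≠ 1) (hn : 1 < n)
    {z : Fin n → ZMod m} (hz : rootEval ζ z ≠ 0) (c : K) :
    ∃ r, rootEval ζ (rotate r z) ≠ 0 ∧ rootEval ζ (rotate r z) + c ≠ 0 := by
  have : NeZero n := ⟨by omega⟩
  have hz₀ := rootEval_eq_pow_mul_rootEval_rotate hζ 0 z
  have hz₁ := rootEval_eq_pow_mul_rootEval_rotate hζ ⟨1, hn⟩ z
  simp only [Fin.val_zero, pow_zero, one_mul, pow_one] at hz₀ hz₁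
  by_cases h₀ : rootEval ζ (rotate 0 z) + c = 0
  · refine ⟨⟨1, hn⟩, fun h => hz (by rw [hz₁, h, mul_zero]), fun h₁ => hζ₁ ?_⟩
    have : (ζ - 1) * rootEval ζ z = 0 := by linear_combination ζ * hz₀ - hz₁ + ζ * h₀ - ζ * h₁
    simpa [sub_eq_zero, hz] using this
  · exact ⟨0, hz₀ ▸ hz, h₀⟩

theorem not_rotCanWin_of_pow_eq_one {ζ : K} (hn : n ≠ 0) (hζ : ζ ^ n = 1) (hζ₁ : ζ ≠ 1) :
    ¬ RotCanWin n m := by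
  have : NeZero n := ⟨hn⟩
  have hn₁ : 1 < n := by
    by_contra! h
    exact hζ₁ (by rwa [show n = 1 by omega, pow_one] at hζ)
  rintro ⟨N, y, hwin⟩
  let S : ℕ → Set (Fin n → ZMod m) := fun k =>
    {s | rootEval ζ s ≠ 0 ∧ rootEval ζ s + rootEval ζ (y k) ≠ 0}
  have hS₀ : (S 0).Nonempty := by
    obtain ⟨r, hr⟩ := exists_rotate_rootEval_ne hζ hζ₁ hn₁
      (z := Pi.single 0 (1 : ZMod m)) (by rw [rootEval_single_zero]; exact one_ne_zero) (rootEval ζ (y 0))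
    exact ⟨_, hr⟩
  have hS : ∀ k, ∀ s ∈ S k, ∃ r, rotate r (s + y k) ∈ S (k + 1) := fun k s hs =>
    exists_rotate_rootEval_ne hζ hζ₁ hn₁ (by rw [rootEval_add]; exact hs.2) _
  obtain ⟨s₀, r, hmem⟩ := exists_rotState_mem y S hS₀ hS
  obtain ⟨k, -, hk⟩ := hwin s₀ r
  exact (hmem k).1 (by rw [hk, rootEval_zero])

end RootEval

theorem no_win_distinct_primes (p q : ℕ) (hp : p.Prime) (hq : q.Prime) (hpq : p ≠ q) :
    ¬ RotCanWin p q := by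
  have : Fact q.Prime := ⟨hq⟩
  have : NeZero (p : ZMod q) :=
    ⟨by rw [Ne, ZMod.natCast_eq_zero_iff, Nat.prime_dvd_prime_iff_eq hq hp]; exact hpq.symm⟩
  obtain ⟨ζ, hζ⟩ := HasEnoughRootsOfUnity.exists_primitiveRoot (AlgebraicClosure (ZMod q)) p
  exact not_rotCanWin_of_pow_eq_one (m := q) hp.ne_zero hζ.pow_eq_one (hζ.ne_one hp.one_lt)
end

section
/- Let a, b, k be positive integers. If the player cannot win the (a, b) rotation game, then the player cannot win the (a·k, b) rotation game. -/
/-!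
Multiplication by `k` embeds `Fin a` additively into `Fin (a * k)`. Playing a winning sequence
for the larger game only on the image of this embedding wins the smaller game: extend any
initial configuration of the smaller game to the larger one and lift the rotations along the
embedding; the states of the larger game then restrict to those of the smaller one.
-/

theorem rotState_comp {a n m : ℕ} (φ : Fin a → Fin n) (hφ : ∀ i j, φ (i + j) = φ i + φ j)
    (y : ℕ → Fin n → ZMod m) (r : ℕ → Fin a) (s₀ : Fin n → ZMod m) (t : ℕ) :
    rotState (fun t => y t ∘ φ) r (s₀ ∘ φ) t = rotState y (φ ∘ r) s₀ t ∘ φ := by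
  induction t with
  | zero => rfl
  | succ t ih =>
    funext i
    simp only [rotState, Function.comp_apply, Pi.add_apply, hφ, ih]

theorem RotWinning.comp {a n m N : ℕ} {y : ℕ → Fin n → ZMod m} (hy : RotWinning n m N y)
    (φ : Fin a → Fin n) (hφ : ∀ i j, φ (i + j) = φ i + φ j) (hinj : Function.Injective φ) :
    RotWinning a m N (fun t => y t ∘ φ) := by
  intro s₀ r
  obtain ⟨t, htN, ht⟩ := hy (Function.extend φ s₀ 0) (φ ∘ r)
  refine ⟨t, htN, ?_⟩
  have hs₀ : Function.extend φ s₀ 0 ∘ φ = s₀ := funext fun i => hinj.extend_apply s₀ 0 i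
  rw [← hs₀, rotState_comp φ hφ, ht]
  rfl

theorem RotCanWin.of_addInjective {a n m : ℕ} (h : RotCanWin n m) (φ : Fin a → Fin n)
    (hφ : ∀ i j, φ (i + j) = φ i + φ j) (hinj : Function.Injective φ) : RotCanWin a m :=
  let ⟨N, y, hy⟩ := h
  ⟨N, fun t => y t ∘ φ, hy.comp φ hφ hinj⟩

def Fin.scale {a k : ℕ} (hk : 0 < k) (i : Fin a) : Fin (a * k) :=
  ⟨i * k, (Nat.mul_lt_mul_right hk).mpr i.isLt⟩

theorem Fin.scale_add {a k : ℕ} (hk : 0 < k) (i j : Fin a) :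
    Fin.scale hk (i + j) = Fin.scale hk i + Fin.scale hk j :=
  Fin.ext <| by
    simp only [Fin.scale, Fin.val_add]
    rw [← Nat.add_mul, Nat.mul_mod_mul_right]

theorem Fin.scale_injective {a k : ℕ} (hk : 0 < k) : Function.Injective (Fin.scale (a := a) hk) :=
  fun _ _ h => Fin.ext <| Nat.eq_of_mul_eq_mul_right hk (Fin.val_eq_of_eq h)

theorem no_win_multiple_positions_general (a b k : ℕ) (hk : 0 < k)
    (h : ¬ RotCanWin a b) : ¬ RotCanWin (a * k) b :=
  fun hwin => h (hwin.of_addInjective (Fin.scale hk) (Fin.scale_add hk) (Fin.scale_injective hk))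

theorem no_win_multiple_positions (a b k : ℕ) (ha : 0 < a) (hb : 0 < b) (hk : 0 < k)
    (h : ¬ RotCanWin a b) : ¬ RotCanWin (a * k) b :=
  no_win_multiple_positions_general a b k hk h
end

section
/- Let a, b, k be positive integers. If the player cannot win the (a, b) rotation game, then the player cannot win the (a, b·k) rotation game. -/
/-! Reducing every coordinate along `ZMod m → ZMod d` turns a play mod `m` into a play mod `d`
with the same rotations. Since the reduction is surjective, every initial configuration mod `d`
lifts, so a winning sequence mod `m` reduces to one mod `d`. -/

theorem rotState_map {n m d : ℕ} (f : ZMod m →+ ZMod d) (y : ℕ → Fin n → ZMod m)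
    (r : ℕ → Fin n) (s₀ : Fin n → ZMod m) (k : ℕ) :
    rotState (fun j => f ∘ y j) r (f ∘ s₀) k = f ∘ rotState y r s₀ k := by
  induction k with
  | zero => rfl
  | succ k ih =>
    funext i
    simp only [rotState, Pi.add_apply, ih, Function.comp_apply, map_add]

theorem RotWinning.map {n m d N : ℕ} {y : ℕ → Fin n → ZMod m} (hy : RotWinning n m N y)
    (f : ZMod m →+ ZMod d) (hf : Function.Surjective f) :
    RotWinning n d N (fun j => f ∘ y j) := by
  intro s₀ r
  obtain ⟨t₀, rfl⟩ : ∃ t₀ : Fin n → ZMod m, f ∘ t₀ = s₀ := hf.comp_left s₀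
  obtain ⟨k, hkN, hk⟩ := hy t₀ r
  refine ⟨k, hkN, ?_⟩
  rw [rotState_map, hk]
  funext i
  exact map_zero f

theorem RotCanWin.of_dvd {n m d : ℕ} (h : RotCanWin n m) (hdm : d ∣ m) : RotCanWin n d := by
  obtain ⟨N, y, hy⟩ := h
  exact ⟨N, _, hy.map (ZMod.castHom hdm (ZMod d)).toAddMonoidHom (ZMod.castHom_surjective hdm)⟩

theorem no_win_multiple_modulus_general (a b k : ℕ)
    (h : ¬ RotCanWin a b) : ¬ RotCanWin a (b * k) :=
  fun hbk => h (hbk.of_dvd (dvd_mul_right b k))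

theorem no_win_multiple_modulus (a b k : ℕ) (ha : 0 < a) (hb : 0 < b) (hk : 0 < k)
    (h : ¬ RotCanWin a b) : ¬ RotCanWin a (b * k) :=
  no_win_multiple_modulus_general a b k h
end

section
/- For every prime p and every positive integer a, the player can win the (p^a, p) rotation game. -/
/-!
In characteristic `p` the cyclic shift `σ` of `Fin (p ^ a) → ZMod p` satisfies
`(σ - 1) ^ p ^ a = σ ^ p ^ a - 1 = 0`, so it is unipotent. The player wins against any
unipotent `σ` on a finite `ZMod p`-module `V`, by induction on `|V|`: `σ` fixes some `c ≠ 0`.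
Play a winning sequence for `V ⧸ ⟨c⟩`, with `p - 1` copies of `c` inserted before each of its
moves. The inserted moves vanish in the quotient, so at the start of some block the state lies
in `⟨c⟩`; as `σ` fixes `c`, the following copies of `c` step it through all of `⟨c⟩`, hence
through `0`.
-/

open Polynomial in
lemma isNilpotent_sub_one_of_pow_eq_one {p : ℕ} [Fact p.Prime] {A : Type*} [Ring A]
    [Algebra (ZMod p) A] {x : A} {a : ℕ} (h : x ^ p ^ a = 1) : IsNilpotent (x - 1) :=
  ⟨p ^ a, by simpa [h] using congrArg (aeval x) (sub_pow_char_pow (X : (ZMod p)[X]) 1 a)⟩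

section Unipotent
variable {R M : Type*} [Ring R] [AddCommGroup M] [Module R M] {f : Module.End R M}

lemma exists_ne_zero_apply_eq_self_of_isNilpotent_sub_one [Nontrivial M]
    (hf : IsNilpotent (f - 1)) : ∃ c ≠ 0, f c = c := by
  obtain ⟨n, hn⟩ := hf
  by_contra! hfix
  have hinj : Function.Injective ⇑(f - 1) :=
    (injective_iff_map_eq_zero _).2 fun c hc => by_contra fun hc0 => hfix c hc0 (sub_eq_zero.1 hc)
  obtain ⟨v, hv⟩ := exists_ne (0 : M)
  exact hv (hinj.iterate n (by rw [← Module.End.pow_apply, ← Module.End.pow_apply, hn]; rfl))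

lemma isNilpotent_mapQ_sub_one {N : Submodule R M} (hN : N ≤ N.comap f)
    (hf : IsNilpotent (f - 1)) : IsNilpotent (N.mapQ N f hN - 1) := by
  have hN' : N ≤ N.comap (f - 1) := fun x hx => by simpa using N.sub_mem (hN hx) hx
  have : N.mapQ N f hN - 1 = N.mapQ N (f - 1) hN' := by ext; simp
  exact this ▸ Module.End.IsNilpotent.mapQ hN' hf

lemma card_quotient_span_singleton_lt [Finite M] {c : M} (hc : c ≠ 0) :
    Nat.card (M ⧸ R ∙ c) < Nat.card M := by
  have : Finite (M ⧸ R ∙ c) := Finite.of_surjective _ (Submodule.mkQ_surjective _)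
  have : Nontrivial (R ∙ c) := ⟨⟨⟨c, Submodule.mem_span_singleton_self c⟩, 0, by simpa using hc⟩⟩
  rw [(R ∙ c).card_eq_card_quotient_mul_card]
  exact lt_mul_left Nat.card_pos Finite.one_lt_card

end Unipotent

section PowGame
variable {R V : Type*} [Ring R] [AddCommGroup V] [Module R V]

/-- The adversary may apply a power of `σ` before each move as well as after it: the inserted
moves of the induction step act in the quotient as such a preceding power. -/
def IsPowGamePlay (σ : Module.End R V) (Y t : ℕ → V) : Prop :=
  ∀ k, ∃ m₁ m₂ : ℕ, t (k + 1) = (σ ^ m₁) ((σ ^ m₂) (t k) + Y k)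

def IsPowGameWinning (σ : Module.End R V) (N : ℕ) (Y : ℕ → V) : Prop :=
  ∀ t, IsPowGamePlay σ Y t → ∃ k ≤ N, t k = 0

variable {σ : Module.End R V} {Y t : ℕ → V}

lemma IsPowGamePlay.mkQ (ht : IsPowGamePlay σ Y t) (N : Submodule R V) (hN : N ≤ N.comap σ) :
    IsPowGamePlay (N.mapQ N σ hN) (N.mkQ ∘ Y) (N.mkQ ∘ t) := by
  intro k
  obtain ⟨m₁, m₂, h⟩ := ht k
  have hpow (m : ℕ) (x : V) : (N.mapQ N σ hN ^ m) (N.mkQ x) = N.mkQ ((σ ^ m) x) := by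
    rw [← Submodule.mapQ_pow]; rfl
  refine ⟨m₁, m₂, ?_⟩
  simp only [Function.comp_apply, h, map_add, hpow]

lemma IsPowGamePlay.exists_eq_pow_of_eq_zero (ht : IsPowGamePlay σ Y t) {b n : ℕ}
    (hY : ∀ i < n, Y (b + i) = 0) : ∃ m, t (b + n) = (σ ^ m) (t b) := by
  induction n with
  | zero => exact ⟨0, rfl⟩
  | succ n ih =>
    obtain ⟨m, hm⟩ := ih fun i hi => hY i (by omega)
    obtain ⟨m₁, m₂, h⟩ := ht (b + n)
    refine ⟨m₁ + (m₂ + m), ?_⟩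
    rw [← add_assoc, h, hY n n.lt_succ_self, add_zero, hm, pow_add, pow_add,
      Module.End.mul_apply, Module.End.mul_apply]

lemma IsPowGamePlay.comp_mul (ht : IsPowGamePlay σ Y t) {n : ℕ} (hn : 0 < n)
    (hY : ∀ k, ∀ i < n - 1, Y (k * n + i) = 0) :
    IsPowGamePlay σ (fun k => Y (k * n + (n - 1))) (fun k => t (k * n)) := by
  intro k
  obtain ⟨m, hm⟩ := ht.exists_eq_pow_of_eq_zero (hY k)
  obtain ⟨m₁, m₂, h⟩ := ht (k * n + (n - 1))
  refine ⟨m₁, m₂ + m, ?_⟩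
  dsimp only
  rw [show (k + 1) * n = k * n + (n - 1) + 1 by rw [Nat.succ_mul]; omega, h, hm, pow_add,
    Module.End.mul_apply]

lemma IsPowGamePlay.eq_smul_of_eq_fixed (ht : IsPowGamePlay σ Y t) {c : V} (hc : σ c = c)
    {b n : ℕ} {u : R} (hb : t b = u • c) (hY : ∀ i < n, Y (b + i) = c) :
    t (b + n) = (u + n) • c := by
  have hfix (m : ℕ) (w : R) : (σ ^ m) (w • c) = w • c := by
    rw [Module.End.pow_apply, Function.iterate_fixed (by rw [map_smul, hc])]
  induction n with
  | zero => simpa using hb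
  | succ n ih =>
    obtain ⟨m₁, m₂, h⟩ := ht (b + n)
    rw [← add_assoc, h, ih fun i hi => hY i (by omega), hY n n.lt_succ_self, hfix,
      show (u + n) • c + c = (u + n + 1) • c by rw [add_smul _ 1, one_smul], hfix, Nat.cast_succ,
      add_assoc]

end PowGame

def paddedMoves {α : Type*} (p : ℕ) (c : α) (Z : ℕ → α) (j : ℕ) : α :=
  if j % p = p - 1 then Z (j / p) else c

section Padding
variable {p : ℕ} {α : Type*} {c : α} {Z : ℕ → α}

lemma paddedMoves_of_lt (k : ℕ) {i : ℕ} (hi : i < p - 1) : paddedMoves p c Z (k * p + i) = c := by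
  have : (k * p + i) % p = i := by rw [Nat.mul_add_mod_self_right, Nat.mod_eq_of_lt (by omega)]
  simp [paddedMoves, this, hi.ne]

lemma paddedMoves_last [NeZero p] (k : ℕ) : paddedMoves p c Z (k * p + (p - 1)) = Z k := by
  have hp := NeZero.pos p
  have hmod : (k * p + (p - 1)) % p = p - 1 := by
    rw [Nat.mul_add_mod_self_right, Nat.mod_eq_of_lt (by omega)]
  have hdiv : (k * p + (p - 1)) / p = k := by
    rw [mul_comm, Nat.mul_add_div hp, Nat.div_eq_of_lt (by omega), add_zero]
  simp [paddedMoves, hmod, hdiv]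

end Padding

section
variable {p : ℕ} [NeZero p] {V : Type*} [AddCommGroup V] [Module (ZMod p) V]
  {σ : Module.End (ZMod p) V}

lemma IsPowGameWinning.of_quotient {c : V} (hc : σ c = c)
    (hC : (ZMod p ∙ c) ≤ (ZMod p ∙ c).comap σ) {M : ℕ} {Z : ℕ → V}
    (hZ : IsPowGameWinning ((ZMod p ∙ c).mapQ _ σ hC) M ((ZMod p ∙ c).mkQ ∘ Z)) :
    IsPowGameWinning σ (M * p + (p - 1)) (paddedMoves p c Z) := by
  intro t ht
  have hblocks := (ht.mkQ _ hC).comp_mul (NeZero.pos p) fun k i hi => by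
    simp [paddedMoves_of_lt k hi]
  simp only [Function.comp_apply, paddedMoves_last] at hblocks
  obtain ⟨k, hk, h0⟩ := hZ _ hblocks
  obtain ⟨u, hu⟩ := Submodule.mem_span_singleton.1 ((Submodule.Quotient.mk_eq_zero _).1 h0)
  have hval := ZMod.val_lt (-u)
  have hwalk := ht.eq_smul_of_eq_fixed hc hu.symm (n := (-u).val) fun i hi =>
    paddedMoves_of_lt k (by omega)
  refine ⟨k * p + (-u).val, ?_, ?_⟩
  · have := Nat.mul_le_mul_right p hk
    omega
  · rw [hwalk, ZMod.natCast_zmod_val, add_neg_cancel, zero_smul]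

theorem exists_isPowGameWinning [Finite V] (hσ : IsNilpotent (σ - 1)) :
    ∃ N Y, IsPowGameWinning σ N Y := by
  induction h : Nat.card V using Nat.strong_induction_on generalizing V with
  | _ n ih =>
  rcases subsingleton_or_nontrivial V with hV | hV
  · exact ⟨0, 0, fun t _ => ⟨0, le_rfl, Subsingleton.elim _ _⟩⟩
  obtain ⟨c, hc0, hc⟩ := exists_ne_zero_apply_eq_self_of_isNilpotent_sub_one hσ
  have hC : (ZMod p ∙ c) ≤ (ZMod p ∙ c).comap σ := by
    rw [Submodule.span_singleton_le_iff_mem, Submodule.mem_comap, hc]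
    exact Submodule.mem_span_singleton_self c
  have : Finite (V ⧸ ZMod p ∙ c) := Finite.of_surjective _ (Submodule.mkQ_surjective _)
  obtain ⟨M, W, hW⟩ := ih _ (h ▸ card_quotient_span_singleton_lt hc0)
    (isNilpotent_mapQ_sub_one hC hσ) rfl
  refine ⟨_, _, IsPowGameWinning.of_quotient hc hC (M := M)
    (Z := Function.surjInv (ZMod p ∙ c).mkQ_surjective ∘ W) ?_⟩
  rwa [← Function.comp_assoc, (Function.rightInverse_surjInv _).comp_eq_id, Function.id_comp]

end

section
variable (R : Type*) [Ring R] (n : ℕ) [NeZero n]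

def cyclicShift : Module.End R (Fin n → R) := LinearMap.funLeft R R (· + 1)

variable {R n}

open Fin.NatCast in
lemma cyclicShift_pow_apply (m : ℕ) (x : Fin n → R) (i : Fin n) :
    (cyclicShift R n ^ m) x i = x (i + m) := by
  induction m generalizing x with
  | zero => simp
  | succ m ih =>
    rw [pow_succ, Module.End.mul_apply, ih, Nat.cast_succ, ← add_assoc]
    rfl

lemma cyclicShift_pow_self : cyclicShift R n ^ n = 1 := by
  ext x i
  simp [cyclicShift_pow_apply]

end

lemma isPowGamePlay_rotState {n m : ℕ} [NeZero n] (y : ℕ → Fin n → ZMod m) (r : ℕ → Fin n)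
    (s₀ : Fin n → ZMod m) : IsPowGamePlay (cyclicShift (ZMod m) n) y (rotState y r s₀) := by
  refine fun k => ⟨(r k).val, 0, ?_⟩
  ext i
  simp [rotState, cyclicShift_pow_apply]

theorem win_prime_power_positions_general (p a : ℕ) (hp : p.Prime) :
    RotCanWin (p ^ a) p := by
  have := Fact.mk hp
  obtain ⟨N, y, hy⟩ := exists_isPowGameWinning
    (isNilpotent_sub_one_of_pow_eq_one (cyclicShift_pow_self (R := ZMod p) (n := p ^ a)))
  exact ⟨N, y, fun s₀ r => hy _ (isPowGamePlay_rotState y r s₀)⟩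

theorem win_prime_power_positions (p a : ℕ) (hp : p.Prime) (ha : 0 < a) :
    RotCanWin (p ^ a) p :=
  win_prime_power_positions_general p a hp
end

section
/- Let p be a prime, a a positive integer, and n = p^a. For each j with 0 ≤ j ≤ n − 1, let x_j : Fin n → ZMod p be the vector whose i-th entry is the binomial coefficient C(i, j) reduced mod p. Then for every j with 0 ≤ j ≤ n − 1 and every k : Fin n, the vector x_j − x'_j, where x'_j is the cyclic shift of x_j by k (i.e., (x'_j) i = x_j (i + k)), lies in the linear span over ZMod p of the vectors x_0, x_1, …, x_{j−1}. -/
/-!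
Vandermonde's identity gives `C(i + k, j) = C(i, j) + ∑_{l < j} C(k, j - l) C(i, l)`, which
expresses the shifted vector as `x_j` plus a combination of `x_0, …, x_{j-1}`. The only subtlety
is that `i + k` is taken modulo `p ^ a`; this is harmless because, for `j < p ^ a`, the residue of
`C(i, j)` mod `p` is `p ^ a`-periodic in `i`: `C(p ^ a, c)` vanishes mod `p` for `0 < c < p ^ a`.
-/

open Finset

lemma Nat.add_choose_eq_add_sum_range (i k j : ℕ) :
    (i + k).choose j = i.choose j + ∑ l ∈ range j, k.choose (j - l) * i.choose l := by
  rw [Nat.add_choose_eq, Nat.sum_antidiagonal_eq_sum_range_succ_mk, sum_range_succ,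
    Nat.sub_self, Nat.choose_zero_right, mul_one, add_comm]
  simp only [mul_comm]

section PrimePowerPeriodicity

variable {p a j : ℕ}

lemma cast_choose_add_prime_pow (hp : p.Prime) (hj : j < p ^ a) (i : ℕ) :
    ((i + p ^ a).choose j : ZMod p) = i.choose j := by
  rw [Nat.add_choose_eq, Nat.cast_sum, sum_eq_single (j, 0) ?_ (by simp)]
  · simp
  rintro ⟨b, c⟩ hbc hne
  rw [HasAntidiagonal.mem_antidiagonal] at hbc
  have hc : c ≠ 0 := by rintro rfl; exact hne (by simp [← hbc])
  rw [Nat.cast_mul, (ZMod.natCast_eq_zero_iff _ p).mpr (hp.dvd_choose_pow hc (by omega)), mul_zero]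

lemma cast_choose_add_mul_prime_pow (hp : p.Prime) (hj : j < p ^ a) (r q : ℕ) :
    ((r + q * p ^ a).choose j : ZMod p) = r.choose j := by
  induction q with
  | zero => simp
  | succ q ih => rw [add_mul, one_mul, ← add_assoc, cast_choose_add_prime_pow hp hj, ih]

lemma cast_choose_mod_prime_pow (hp : p.Prime) (hj : j < p ^ a) (i : ℕ) :
    ((i % p ^ a).choose j : ZMod p) = i.choose j := by
  conv_rhs => rw [← Nat.mod_add_div' i (p ^ a)]
  rw [cast_choose_add_mul_prime_pow hp hj]

end PrimePowerPeriodicity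

lemma cast_choose_val_add {p a : ℕ} (hp : p.Prime) (i k j : Fin (p ^ a)) :
    ((i + k : Fin (p ^ a)).val.choose j : ZMod p) =
      (i.val.choose j : ZMod p) + ∑ l ∈ Iio j, (k.val.choose (j - l) : ZMod p) * i.val.choose l := by
  rw [Fin.val_add, cast_choose_mod_prime_pow hp j.isLt, Nat.add_choose_eq_add_sum_range,
    ← Nat.Iio_eq_range, ← Fin.map_valEmbedding_Iio, sum_map]
  push_cast
  rfl

theorem binomial_shift_in_span_general (p : ℕ) (hp : p.Prime) (a : ℕ)
    (n : ℕ) (hn : n = p ^ a)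
    (x : Fin n → Fin n → ZMod p)
    (hx : ∀ j i : Fin n, x j i = (Nat.choose i.val j.val : ZMod p))
    (j k : Fin n) :
    (x j - fun i => x j (i + k)) ∈
      Submodule.span (ZMod p) (x '' {j' : Fin n | j' < j}) := by
  subst hn
  have hshift : (x j - fun i => x j (i + k)) =
      ∑ l ∈ Iio j, (-(k.val.choose (j - l) : ZMod p)) • x l := by
    funext i
    simp only [Pi.sub_apply, Finset.sum_apply, Pi.smul_apply, smul_eq_mul, hx,
      cast_choose_val_add hp, neg_mul, sum_neg_distrib]
    ring
  rw [hshift]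
  exact Submodule.sum_mem _ fun l hl =>
    Submodule.smul_mem _ _ (Submodule.subset_span ⟨l, mem_Iio.mp hl, rfl⟩)

theorem binomial_shift_in_span (p : ℕ) (hp : p.Prime) (a : ℕ) (ha : 0 < a)
    (n : ℕ) (hn : n = p ^ a)
    (x : Fin n → Fin n → ZMod p)
    (hx : ∀ j i : Fin n, x j i = (Nat.choose i.val j.val : ZMod p))
    (j k : Fin n) :
    (x j - fun i => x j (i + k)) ∈
      Submodule.span (ZMod p) (x '' {j' : Fin n | j' < j}) :=
  binomial_shift_in_span_general p hp a n hn x hx j k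
end

section
/- For all integers n ≥ 1 and m ≥ 1, every winning sequence of moves y_1, …, y_N for the (n, m) rotation game satisfies N ≥ m^n − 1. In other words, if the player can win, he cannot guarantee a win in fewer than m^n − 1 moves. -/
/-!
Against the opponent who never rotates, the state after `k` moves is the initial
configuration plus the `k`-th partial sum of the moves. It is zero exactly when the initial
configuration is minus that partial sum, so a winning sequence of length `N` forces the
`N + 1` partial sums to take all `m ^ n` values.
-/

open Finset

theorem rotState_zero_rotation {n m : ℕ} [NeZero n] (y : ℕ → Fin n → ZMod m)
    (s₀ : Fin n → ZMod m) (k : ℕ) :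
    rotState y (fun _ => 0) s₀ k = s₀ + ∑ j ∈ range k, y j := by
  induction k with
  | zero => simp [rotState]
  | succ k ih =>
    funext i
    simp [rotState, ih, sum_range_succ, add_assoc]

theorem RotWinning.surjective_neg_partialSum {n m N : ℕ} [NeZero n]
    {y : ℕ → Fin n → ZMod m} (hy : RotWinning n m N y) :
    Function.Surjective fun k : Fin (N + 1) => -∑ j ∈ range k, y j := by
  intro s₀
  obtain ⟨k, hkN, hk⟩ := hy s₀ fun _ => 0
  refine ⟨⟨k, Nat.lt_succ_of_le hkN⟩, ?_⟩
  rw [rotState_zero_rotation] at hk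
  exact (eq_neg_of_add_eq_zero_left hk).symm

theorem RotWinning.card_le {n m N : ℕ} [NeZero n] [NeZero m]
    {y : ℕ → Fin n → ZMod m} (hy : RotWinning n m N y) :
    m ^ n ≤ N + 1 := by
  simpa [Fintype.card_fun, ZMod.card] using
    Fintype.card_le_of_surjective _ hy.surjective_neg_partialSum

theorem winning_sequence_length_lower_bound_general (n m : ℕ)
    (N : ℕ) (y : ℕ → Fin n → ZMod m) (hy : RotWinning n m N y) :
    m ^ n - 1 ≤ N := by
  rcases Nat.eq_zero_or_pos n with rfl | hn
  · simp
  rcases Nat.eq_zero_or_pos m with rfl | hm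
  · simp [zero_pow hn.ne']
  have : NeZero n := NeZero.of_pos hn
  have : NeZero m := NeZero.of_pos hm
  have := hy.card_le
  omega

theorem winning_sequence_length_lower_bound (n m : ℕ) (hn : 1 ≤ n) (hm : 1 ≤ m)
    (N : ℕ) (y : ℕ → Fin n → ZMod m) (hy : RotWinning n m N y) :
    m ^ n - 1 ≤ N :=
  winning_sequence_length_lower_bound_general n m N y hy
end

section
/- Let p be a prime, a a natural number, n ≥ 1, and let G be a subgroup of the symmetric group on Fin n with |G| = p^a. Then the player can win the (G, p)-game, where the set of permutations available to the adversary is the underlying set of G (which contains the identity). -/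
/-- The state of the permutation game after `k` turns: `s₀` is the initial
configuration, `y k` is the move added on turn `k+1`, and `σ k` is the
permutation applied after that move (`(σ • x) i = x (σ⁻¹ i)`). -/
def permState {n m : ℕ} (y : ℕ → Fin n → ZMod m) (σ : ℕ → Equiv.Perm (Fin n))
    (s₀ : Fin n → ZMod m) : ℕ → Fin n → ZMod m
  | 0 => s₀
  | k + 1 => fun i => (permState y σ s₀ k + y k) ((σ k)⁻¹ i)

/-- The player can win the (S, m) permutation game: some finite sequence of
moves reaches the zero configuration against every initial configuration and
every sequence of permutations drawn from `S`. -/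
def PermCanWin {n : ℕ} (S : Set (Equiv.Perm (Fin n))) (m : ℕ) : Prop :=
  ∃ (N : ℕ) (y : ℕ → Fin n → ZMod m),
    ∀ (s₀ : Fin n → ZMod m) (σ : ℕ → Equiv.Perm (Fin n)),
      (∀ k, σ k ∈ S) → ∃ k ≤ N, permState y σ s₀ k = 0

/-!
Let `G` act on `V = (ZMod p)ⁿ` by permuting coordinates, and put `V₀ = 0`,
`Vᵢ₊₁ = {v | g • v - v ∈ Vᵢ for all g ∈ G}`. A `p`-group fixes a nonzero vector of every
nonzero finite `ZMod p`-representation (count fixed points modulo `p`); applied to `V ⧸ Vᵢ`,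
this makes the chain grow strictly until it reaches `V`.

If `G` acts trivially on `W ⧸ U` and the moves `Y ⊆ U` win from every state in `U`, then
playing `w, Y, -w` for every `w ∈ W` in turn wins from every state in `W`: modulo `U` the
adversary cannot move a state of `W`, and neither can moves in `U`, so each such block returns
the state to its class, except the block with `w ≡ -s₀`, in which `Y` starts inside `U`.
-/

namespace Representation

section

variable {k G V : Type*} [CommRing k] [Group G] [AddCommGroup V] [Module k V]
  (ρ : Representation k G V)

def invariantsSeries : ℕ → Submodule k V
  | 0 => ⊥
  | i + 1 => ⨅ g, (invariantsSeries i).comap (ρ g - 1)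

variable {ρ}

@[simp]
lemma invariantsSeries_zero : ρ.invariantsSeries 0 = ⊥ :=
  rfl

lemma mem_invariantsSeries_succ {i : ℕ} {v : V} :
    v ∈ ρ.invariantsSeries (i + 1) ↔ ∀ g, ρ g v - v ∈ ρ.invariantsSeries i := by
  simp [invariantsSeries]

lemma invariantsSeries_le_succ (i : ℕ) :
    ρ.invariantsSeries i ≤ ρ.invariantsSeries (i + 1) := by
  induction i with
  | zero => exact bot_le
  | succ i ih =>
    exact fun v hv => mem_invariantsSeries_succ.2 fun g => ih (mem_invariantsSeries_succ.1 hv g)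

lemma invariantsSeries_le_comap (i : ℕ) (g : G) :
    ρ.invariantsSeries i ≤ (ρ.invariantsSeries i).comap (ρ g) := by
  cases i with
  | zero => simp
  | succ i =>
    intro v hv
    have hgv : ρ g v = (ρ g v - v) + v := by abel
    rw [Submodule.mem_comap, hgv]
    exact add_mem (invariantsSeries_le_succ i (mem_invariantsSeries_succ.1 hv g)) hv

end

lemma invariants_ne_bot_of_isPGroup {p : ℕ} [Fact p.Prime] {G V : Type*} [Group G]
    [AddCommGroup V] [Module (ZMod p) V] [Finite V] [Nontrivial V]
    (ρ : Representation (ZMod p) G V)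
    (hG : IsPGroup p G) : ρ.invariants ≠ ⊥ := by
  let := MulAction.compHom V ρ
  have hcard : p ∣ Nat.card V := by
    rw [Module.natCard_eq_pow_finrank (K := ZMod p), Nat.card_zmod]
    exact dvd_pow_self p Module.finrank_pos.ne'
  obtain ⟨v, hv, hv0⟩ := hG.exists_fixed_point_of_prime_dvd_card_of_fixed_point V hcard
    (a := 0) fun g => map_zero (ρ g)
  exact (Submodule.ne_bot_iff _).2 ⟨v, (ρ.mem_invariants v).2 hv, hv0.symm⟩

lemma invariantsSeries_lt_succ {p : ℕ} [Fact p.Prime] {G V : Type*} [Group G]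
    [AddCommGroup V] [Module (ZMod p) V] [Finite V] {ρ : Representation (ZMod p) G V}
    (hG : IsPGroup p G) {i : ℕ} (hi : ρ.invariantsSeries i ≠ ⊤) :
    ρ.invariantsSeries i < ρ.invariantsSeries (i + 1) := by
  set W := ρ.invariantsSeries i
  have : Nontrivial (V ⧸ W) := Submodule.Quotient.nontrivial_iff.2 hi
  have : Finite (V ⧸ W) := Finite.of_surjective _ W.mkQ_surjective
  obtain ⟨q, hq, hq0⟩ := (Submodule.ne_bot_iff _).1
    ((ρ.quotient W (invariantsSeries_le_comap i)).invariants_ne_bot_of_isPGroup hG)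
  obtain ⟨v, rfl⟩ := Submodule.mkQ_surjective W q
  refine SetLike.lt_iff_le_and_exists.2 ⟨invariantsSeries_le_succ i, v, ?_, ?_⟩
  · refine mem_invariantsSeries_succ.2 fun g => ?_
    have := (ρ.quotient W _).mem_invariants _ |>.1 hq g
    simpa [Submodule.Quotient.eq] using this
  · simpa using hq0

lemma exists_invariantsSeries_eq_top {p : ℕ} [Fact p.Prime] {G V : Type*} [Group G]
    [AddCommGroup V] [Module (ZMod p) V] [Finite V] (ρ : Representation (ZMod p) G V)
    (hG : IsPGroup p G) : ∃ t, ρ.invariantsSeries t = ⊤ := by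
  obtain ⟨t, ht⟩ := WellFoundedGT.monotone_chain_condition
    ⟨ρ.invariantsSeries, monotone_nat_of_le_succ invariantsSeries_le_succ⟩
  by_contra! h
  exact (invariantsSeries_lt_succ hG (h t)).ne (ht (t + 1) t.le_succ)

end Representation

def permRep (R : Type*) {α : Type*} [CommSemiring R] :
    Representation R (Equiv.Perm α) (α → R) where
  toFun σ := LinearMap.funLeft R R ⇑σ⁻¹
  map_one' := rfl
  map_mul' _ _ := rfl

@[simp]
lemma permRep_apply {R α : Type*} [CommSemiring R] (σ : Equiv.Perm α) (x : α → R) (i : α) :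
    permRep R σ x i = x (σ⁻¹ i) :=
  rfl

section PermGame

variable {n m : ℕ}

lemma permState_succ (y : ℕ → Fin n → ZMod m) (σ : ℕ → Equiv.Perm (Fin n))
    (s : Fin n → ZMod m) (k : ℕ) :
    permState y σ s (k + 1) = permRep (ZMod m) (σ k) (permState y σ s k + y k) :=
  rfl

lemma permState_congr {y₁ y₂ : ℕ → Fin n → ZMod m} (σ : ℕ → Equiv.Perm (Fin n))
    (s : Fin n → ZMod m) {k : ℕ} (h : ∀ j < k, y₁ j = y₂ j) :
    permState y₁ σ s k = permState y₂ σ s k := by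
  induction k with
  | zero => rfl
  | succ k ih =>
    rw [permState_succ, permState_succ, ih fun j hj => h j (by omega), h k k.lt_succ_self]

lemma permState_add (y : ℕ → Fin n → ZMod m) (σ : ℕ → Equiv.Perm (Fin n))
    (s : Fin n → ZMod m) (t k : ℕ) :
    permState y σ s (t + k) =
      permState (fun j => y (t + j)) (fun j => σ (t + j)) (permState y σ s t) k := by
  induction k with
  | zero => rfl
  | succ k ih => rw [← add_assoc, permState_succ, permState_succ, ih]

lemma permState_append_of_le (l₁ l₂ : List (Fin n → ZMod m)) (σ : ℕ → Equiv.Perm (Fin n))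
    (s : Fin n → ZMod m) {k : ℕ} (hk : k ≤ l₁.length) :
    permState ((l₁ ++ l₂).getD · 0) σ s k = permState (l₁.getD · 0) σ s k :=
  permState_congr σ s fun j hj => List.getD_append _ _ _ _ (by omega)

lemma permState_append_length_add (l₁ l₂ : List (Fin n → ZMod m))
    (σ : ℕ → Equiv.Perm (Fin n)) (s : Fin n → ZMod m) (k : ℕ) :
    permState ((l₁ ++ l₂).getD · 0) σ s (l₁.length + k) =
      permState (l₂.getD · 0) (fun j => σ (l₁.length + j))
        (permState (l₁.getD · 0) σ s l₁.length) k := by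
  rw [permState_add, permState_append_of_le l₁ l₂ σ s le_rfl]
  exact permState_congr _ _ fun j _ => by
    rw [List.getD_append_right _ _ _ _ (by omega), Nat.add_sub_cancel_left]

def WinsOrEndsIn (S : Set (Equiv.Perm (Fin n))) (l : List (Fin n → ZMod m))
    (P Q : Set (Fin n → ZMod m)) : Prop :=
  ∀ s ∈ P, ∀ σ : ℕ → Equiv.Perm (Fin n), (∀ k, σ k ∈ S) →
    (∃ k ≤ l.length, permState (l.getD · 0) σ s k = 0) ∨
      permState (l.getD · 0) σ s l.length ∈ Q

variable {S : Set (Equiv.Perm (Fin n))} {l l₁ l₂ : List (Fin n → ZMod m)}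
  {P P' Q Q' R : Set (Fin n → ZMod m)}

lemma winsOrEndsIn_nil (h : P ⊆ Q) : WinsOrEndsIn S [] P Q :=
  fun _ hs _ _ => .inr (h hs)

lemma winsOrEndsIn_empty : WinsOrEndsIn S l ∅ Q :=
  fun _ hs => hs.elim

lemma winsOrEndsIn_zero : WinsOrEndsIn S l {0} Q :=
  fun _ hs _ _ => .inl ⟨0, Nat.zero_le _, hs⟩

lemma winsOrEndsIn_singleton {a : Fin n → ZMod m}
    (h : ∀ s ∈ P, ∀ σ ∈ S, permRep (ZMod m) σ (s + a) ∈ Q) : WinsOrEndsIn S [a] P Q :=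
  fun s hs σ hσ => .inr (h s hs (σ 0) (hσ 0))

lemma WinsOrEndsIn.mono (h : WinsOrEndsIn S l P Q) (hP : P' ⊆ P) (hQ : Q ⊆ Q') :
    WinsOrEndsIn S l P' Q' :=
  fun s hs σ hσ => (h s (hP hs) σ hσ).imp_right (@hQ _)

lemma WinsOrEndsIn.append (h₁ : WinsOrEndsIn S l₁ P Q) (h₂ : WinsOrEndsIn S l₂ Q R) :
    WinsOrEndsIn S (l₁ ++ l₂) P R := by
  intro s hs σ hσ
  rcases h₁ s hs σ hσ with ⟨k, hk, hwin⟩ | hQ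
  · exact .inl ⟨k, by simp; omega, by rwa [permState_append_of_le _ _ _ _ hk]⟩
  rcases h₂ _ hQ _ fun j => hσ _ with ⟨k, hk, hwin⟩ | hR
  · exact .inl ⟨l₁.length + k, by simp; omega, by rwa [permState_append_length_add]⟩
  · exact .inr (by rwa [List.length_append, permState_append_length_add])

end PermGame

section Filtration

variable {n m : ℕ}

def ActsTriviallyModulo (S : Set (Equiv.Perm (Fin n)))
    (U W : Submodule (ZMod m) (Fin n → ZMod m)) : Prop :=
  ∀ σ ∈ S, ∀ w ∈ W, permRep (ZMod m) σ w - w ∈ U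

variable {S : Set (Equiv.Perm (Fin n))} {U W : Submodule (ZMod m) (Fin n → ZMod m)}

lemma winsOrEndsIn_singleton_coset (hUW : U ≤ W) (hSW : ActsTriviallyModulo S U W)
    {a c : Fin n → ZMod m} (ha : a ∈ W) (hc : c ∈ W) :
    WinsOrEndsIn S [a] {x | x - c ∈ U} {x | x - (c + a) ∈ U} := by
  refine winsOrEndsIn_singleton fun s hs σ hσ => ?_
  have hsa : s + a ∈ W := by
    simpa using add_mem (add_mem (hUW hs) hc) ha
  have hsplit : permRep (ZMod m) σ (s + a) - (c + a) =
      (permRep (ZMod m) σ (s + a) - (s + a)) + (s - c) := by abel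
  change permRep (ZMod m) σ (s + a) - (c + a) ∈ U
  rw [hsplit]
  exact add_mem (hSW σ hσ _ hsa) hs

lemma winsOrEndsIn_coset_of_forall_mem (hUW : U ≤ W)
    (hSW : ActsTriviallyModulo S U W) {c : Fin n → ZMod m} (hc : c ∈ W) :
    ∀ {l : List (Fin n → ZMod m)}, (∀ y ∈ l, y ∈ U) →
      WinsOrEndsIn S l {x | x - c ∈ U} {x | x - c ∈ U}
  | [], _ => winsOrEndsIn_nil subset_rfl
  | a :: l, hl => by
    have ha : a ∈ U := hl a List.mem_cons_self
    have hstay : {x | x - (c + a) ∈ U} ⊆ {x | x - c ∈ U} := fun x hx => by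
      simpa [sub_add_eq_sub_sub] using add_mem hx ha
    exact ((winsOrEndsIn_singleton_coset hUW hSW (hUW ha) hc).mono subset_rfl hstay).append
      (winsOrEndsIn_coset_of_forall_mem hUW hSW hc fun y hy => hl y (List.mem_cons_of_mem a hy))

def conjMoves (w : Fin n → ZMod m) (Y : List (Fin n → ZMod m)) : List (Fin n → ZMod m) :=
  w :: (Y ++ [-w])

lemma winsOrEndsIn_conjMoves (hUW : U ≤ W) (hSW : ActsTriviallyModulo S U W)
    {Y : List (Fin n → ZMod m)} (hYU : ∀ y ∈ Y, y ∈ U) {w c : Fin n → ZMod m} (hw : w ∈ W)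
    (hc : c ∈ W) : WinsOrEndsIn S (conjMoves w Y) {x | x - c ∈ U} {x | x - c ∈ U} :=
  (winsOrEndsIn_singleton_coset hUW hSW hw hc).append <|
    (winsOrEndsIn_coset_of_forall_mem hUW hSW (add_mem hc hw) hYU).append <|
      (winsOrEndsIn_singleton_coset hUW hSW (neg_mem hw) (add_mem hc hw)).mono subset_rfl
        (by simp)

lemma winsOrEndsIn_conjMoves_of_add_mem (hUW : U ≤ W)
    (hSW : ActsTriviallyModulo S U W) {Y : List (Fin n → ZMod m)}
    (hY : WinsOrEndsIn S Y U ∅) {w c : Fin n → ZMod m} (hw : w ∈ W) (hc : c ∈ W)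
    (hcw : c + w ∈ U) : WinsOrEndsIn S (conjMoves w Y) {x | x - c ∈ U} ∅ :=
  (winsOrEndsIn_singleton_coset hUW hSW hw hc).append <|
    (hY.mono (fun x hx => by simpa using add_mem hx hcw) subset_rfl).append winsOrEndsIn_empty

lemma winsOrEndsIn_flatMap_conjMoves (hUW : U ≤ W)
    (hSW : ActsTriviallyModulo S U W) {Y : List (Fin n → ZMod m)}
    (hYU : ∀ y ∈ Y, y ∈ U) (hY : WinsOrEndsIn S Y U ∅) {c : Fin n → ZMod m} (hc : c ∈ W) :
    ∀ {L : List (Fin n → ZMod m)}, (∀ w ∈ L, w ∈ W) → (∃ w ∈ L, c + w ∈ U) →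
      WinsOrEndsIn S (L.flatMap (conjMoves · Y)) {x | x - c ∈ U} ∅
  | [], _, ⟨_, hw, _⟩ => absurd hw List.not_mem_nil
  | w :: L, hL, hcL => by
    have hw : w ∈ W := hL w List.mem_cons_self
    rw [List.flatMap_cons]
    by_cases hcw : c + w ∈ U
    · exact (winsOrEndsIn_conjMoves_of_add_mem hUW hSW hY hw hc hcw).append winsOrEndsIn_empty
    · obtain ⟨w', hw', hcw'⟩ := hcL
      have hw'L : w' ∈ L := (List.mem_cons.1 hw').resolve_left fun h => hcw (h ▸ hcw')
      exact (winsOrEndsIn_conjMoves hUW hSW hYU hw hc).append <|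
        winsOrEndsIn_flatMap_conjMoves hUW hSW hYU hY hc
          (fun v hv => hL v (List.mem_cons_of_mem w hv)) ⟨w', hw'L, hcw'⟩

lemma exists_winsOrEndsIn_of_le [NeZero m] (hUW : U ≤ W)
    (hSW : ActsTriviallyModulo S U W) {Y : List (Fin n → ZMod m)}
    (hYU : ∀ y ∈ Y, y ∈ U) (hY : WinsOrEndsIn S Y U ∅) :
    ∃ l : List (Fin n → ZMod m), (∀ y ∈ l, y ∈ W) ∧ WinsOrEndsIn S l W ∅ := by
  set L := (W : Set (Fin n → ZMod m)).toFinite.toFinset.toList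
  have hL : ∀ w, w ∈ L ↔ w ∈ W := by simp [L]
  refine ⟨L.flatMap (conjMoves · Y), fun y hy => ?_, fun s hs => ?_⟩
  · obtain ⟨w, hw, hy⟩ := List.mem_flatMap.1 hy
    have hw := (hL w).1 hw
    simp only [conjMoves, List.mem_cons, List.mem_append, List.not_mem_nil, or_false] at hy
    rcases hy with rfl | hy | rfl
    exacts [hw, hUW (hYU y hy), neg_mem hw]
  · exact winsOrEndsIn_flatMap_conjMoves hUW hSW hYU hY hs (fun w hw => (hL w).1 hw)
      ⟨-s, (hL _).2 (neg_mem hs), by simp⟩ s (by simp)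

lemma exists_winsOrEndsIn_invariantsSeries [NeZero m] (G : Subgroup (Equiv.Perm (Fin n)))
    (i : ℕ) : ∃ l : List (Fin n → ZMod m),
      (∀ y ∈ l, y ∈ Representation.invariantsSeries ((permRep (ZMod m)).comp G.subtype) i) ∧
        WinsOrEndsIn G l
          (Representation.invariantsSeries ((permRep (ZMod m)).comp G.subtype) i) ∅ := by
  induction i with
  | zero => exact ⟨[], by simp, winsOrEndsIn_zero.mono (by simp) subset_rfl⟩
  | succ i ih =>
    obtain ⟨Y, hYU, hY⟩ := ih
    exact exists_winsOrEndsIn_of_le (Representation.invariantsSeries_le_succ i)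
      (fun σ hσ w hw => Representation.mem_invariantsSeries_succ.1 hw ⟨σ, hσ⟩) hYU hY

end Filtration

theorem win_p_group_permutation_game_general (p : ℕ) (hp : p.Prime) (a n : ℕ)
    (G : Subgroup (Equiv.Perm (Fin n))) (hG : Nat.card G = p ^ a) :
    PermCanWin (G : Set (Equiv.Perm (Fin n))) p := by
  have := Fact.mk hp
  obtain ⟨t, ht⟩ := Representation.exists_invariantsSeries_eq_top
    ((permRep (ZMod p)).comp G.subtype) (IsPGroup.of_card hG)
  obtain ⟨l, -, hl⟩ := exists_winsOrEndsIn_invariantsSeries (m := p) G t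
  refine ⟨l.length, (l.getD · 0), fun s σ hσ => ?_⟩
  exact (hl s (by simp [ht]) σ hσ).resolve_right (Set.notMem_empty _)

theorem win_p_group_permutation_game (p : ℕ) (hp : p.Prime) (a n : ℕ) (hn : 1 ≤ n)
    (G : Subgroup (Equiv.Perm (Fin n))) (hG : Nat.card G = p ^ a) :
    PermCanWin (G : Set (Equiv.Perm (Fin n))) p :=
  win_p_group_permutation_game_general p hp a n G hG
end

section
/- Let p be a prime, n ≥ 1, and let G be a subgroup of the symmetric group on Fin n whose cardinality is a power of p. Then there exists a basis x_0, x_1, …, x_{n−1} of the ZMod p-vector space (Fin n → ZMod p) such that for every j with 0 ≤ j ≤ n − 1 and every g ∈ G, the vector x_j − g • x_j lies in the linear span over ZMod p of x_0, x_1, …, x_{j−1}. -/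
/-!
A `p`-group acting linearly on a nonzero finite vector space in characteristic `p` fixes a nonzero
vector: the orbits of non-fixed points have size divisible by `p`, as does the space itself, so
the fixed points are a positive multiple of `p` in number. Applied to `V ⧸ W` for a `G`-stable
proper subspace `W`, this gives a vector outside `W` that `G` fixes modulo `W`; starting from
`W = 0` and adjoining such vectors one at a time builds the basis.
-/

open Module Submodule MulAction

theorem IsPGroup.exists_mem_fixedPoints_ne_zero {p : ℕ} [Fact p.Prime] {G M : Type*} [Group G]
    [AddCommGroup M] [Finite M] [Nontrivial M] [DistribMulAction G M] (hG : IsPGroup p G)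
    (hM : ∀ m : M, p • m = 0) : ∃ m ∈ fixedPoints G M, m ≠ 0 := by
  obtain ⟨m, hm⟩ := exists_ne (0 : M)
  have hpM : p ∣ Nat.card M := addOrderOf_eq_prime (hM m) hm ▸ addOrderOf_dvd_natCard m
  obtain ⟨m', hm', hne⟩ :=
    hG.exists_fixed_point_of_prime_dvd_card_of_fixed_point M hpM (a := 0) (smul_zero ·)
  exact ⟨m', hm', hne.symm⟩

namespace Representation

def ofPermFun (K α : Type*) [CommSemiring K] : Representation K (Equiv.Perm α) (α → K) where
  toFun σ := LinearMap.funLeft K K ⇑σ⁻¹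
  map_one' := rfl
  map_mul' _ _ := rfl

variable {K G V : Type*} [Field K] [Group G] [AddCommGroup V] [Module K V]
  (ρ : Representation K G V)

/-- Every `ρ g` has an upper unitriangular matrix in the family `x`. -/
def IsUnitriangular {k : ℕ} (x : Fin k → V) : Prop :=
  ∀ j g, x j - ρ g (x j) ∈ span K (x '' Set.Iio j)

variable {ρ}

theorem IsUnitriangular.span_range_le_comap {k : ℕ} {x : Fin k → V} (hx : ρ.IsUnitriangular x)
    (g : G) : span K (Set.range x) ≤ (span K (Set.range x)).comap (ρ g) := by
  rw [span_le]
  rintro _ ⟨j, rfl⟩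
  have hdiff : x j - ρ g (x j) ∈ span K (Set.range x) :=
    span_mono (Set.image_subset_range _ _) (hx j g)
  rw [SetLike.mem_coe, mem_comap, ← sub_sub_cancel (x j) (ρ g (x j))]
  exact sub_mem (subset_span ⟨j, rfl⟩) hdiff

theorem IsUnitriangular.snoc {k : ℕ} {x : Fin k → V} (hx : ρ.IsUnitriangular x) {c : V}
    (hc : ∀ g, c - ρ g c ∈ span K (Set.range x)) : ρ.IsUnitriangular (Fin.snoc x c) := by
  intro j g
  refine Fin.lastCases ?_ (fun i => ?_) j
  · rw [Fin.snoc_last]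
    refine span_mono ?_ (hc g)
    rintro _ ⟨i, rfl⟩
    exact ⟨i.castSucc, Fin.castSucc_lt_last i, by simp⟩
  · rw [Fin.snoc_castSucc]
    refine span_mono ?_ (hx i g)
    rintro _ ⟨i', hi', rfl⟩
    exact ⟨i'.castSucc, Fin.castSucc_lt_castSucc_iff.mpr hi', by simp⟩

variable {p : ℕ} [Fact p.Prime] [CharP K p] [Finite V]

theorem exists_notMem_forall_sub_mem (hG : IsPGroup p G) {W : Submodule K V}
    (hW : ∀ g, W ≤ W.comap (ρ g)) (hWtop : W ≠ ⊤) :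
    ∃ v ∉ W, ∀ g, v - ρ g v ∈ W := by
  let _ := DistribMulAction.compHom (V ⧸ W) (ρ.quotient W hW)
  have : Finite (V ⧸ W) := Finite.of_surjective _ (Submodule.Quotient.mk_surjective W)
  have : Nontrivial (V ⧸ W) := Submodule.Quotient.nontrivial_iff.mpr hWtop
  have hchar (q : V ⧸ W) : p • q = 0 := by
    rw [← Nat.cast_smul_eq_nsmul K, CharP.cast_eq_zero, zero_smul]
  obtain ⟨q, hq, hq0⟩ := hG.exists_mem_fixedPoints_ne_zero hchar
  obtain ⟨v, rfl⟩ := Submodule.Quotient.mk_surjective W q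
  exact ⟨v, fun hv => hq0 ((Submodule.Quotient.mk_eq_zero W).mpr hv),
    fun g => (Submodule.Quotient.eq W).mp (hq g).symm⟩

theorem exists_linearIndependent_isUnitriangular (hG : IsPGroup p G) :
    ∀ k ≤ finrank K V, ∃ x : Fin k → V, LinearIndependent K x ∧ ρ.IsUnitriangular x
  | 0, _ => ⟨Fin.elim0, linearIndependent_empty_type, fun j => j.elim0⟩
  | k + 1, hk => by
    obtain ⟨x, hx, hxρ⟩ := exists_linearIndependent_isUnitriangular hG k (by omega)
    have hWtop : span K (Set.range x) ≠ ⊤ := by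
      intro htop
      have := finrank_span_eq_card hx
      rw [htop, finrank_top, Fintype.card_fin] at this
      omega
    obtain ⟨c, hcW, hc⟩ := exists_notMem_forall_sub_mem hG hxρ.span_range_le_comap hWtop
    exact ⟨Fin.snoc x c, linearIndependent_finSnoc.mpr ⟨hx, hcW⟩, hxρ.snoc hc⟩

theorem exists_basis_isUnitriangular (hG : IsPGroup p G) {n : ℕ} (hn : finrank K V = n) :
    ∃ b : Basis (Fin n) K V, ρ.IsUnitriangular b := by
  obtain ⟨x, hx, hxρ⟩ := exists_linearIndependent_isUnitriangular (ρ := ρ) hG n hn.ge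
  refine ⟨basisOfLinearIndependentOfCardEqFinrank' x hx (by simp [hn]), ?_⟩
  rwa [coe_basisOfLinearIndependentOfCardEqFinrank']

end Representation

theorem p_group_triangular_basis_general (p : ℕ) (hp : p.Prime) (n : ℕ)
    (G : Subgroup (Equiv.Perm (Fin n))) (hG : ∃ a : ℕ, Nat.card G = p ^ a) :
    ∃ b : Module.Basis (Fin n) (ZMod p) (Fin n → ZMod p),
      ∀ (j : Fin n), ∀ g ∈ G,
        (b j - fun i => b j (g⁻¹ i)) ∈
          Submodule.span (ZMod p) (⇑b '' {j' : Fin n | j' < j}) := by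
  have : Fact p.Prime := ⟨hp⟩
  obtain ⟨a, ha⟩ := hG
  obtain ⟨b, hb⟩ := Representation.exists_basis_isUnitriangular
    (ρ := (Representation.ofPermFun (ZMod p) (Fin n)).comp G.subtype)
    (IsPGroup.of_card ha) (finrank_fin_fun _)
  exact ⟨b, fun j g hg => hb j ⟨g, hg⟩⟩

theorem p_group_triangular_basis (p : ℕ) (hp : p.Prime) (n : ℕ) (hn : 1 ≤ n)
    (G : Subgroup (Equiv.Perm (Fin n))) (hG : ∃ a : ℕ, Nat.card G = p ^ a) :
    ∃ b : Module.Basis (Fin n) (ZMod p) (Fin n → ZMod p),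
      ∀ (j : Fin n), ∀ g ∈ G,
        (b j - fun i => b j (g⁻¹ i)) ∈
          Submodule.span (ZMod p) (⇑b '' {j' : Fin n | j' < j}) :=
  p_group_triangular_basis_general p hp n G hG
end

section
/- Let p and q be distinct primes and let x, y : Fin p → ZMod q. If for every r : Fin p the function i ↦ x (i + r) + y i is constant, then x is constant. Consequently, from any configuration of the (p, q) rotation game that is not homogeneous, no single move can guarantee a homogeneous configuration after an arbitrary rotation of the table. -/
/-!
Subtracting the condition for the rotation `0` from the one for `r` shows that rotating `x` by `r`
adds a constant `d r`. Summing over the `p` positions of the cyclic table, the rotation does not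
change the sum, so `p • d r = 0`; since `p` is invertible in `ZMod q`, `d r = 0`, and `x` is
invariant under every rotation.
-/

section ShiftedByConstant

variable {A M : Type*} [AddGroup A] [Fintype A]

theorem card_nsmul_eq_zero_of_add_shift [AddCommGroup M] {x : A → M} {r : A} {d : M}
    (hx : ∀ i, x (i + r) = x i + d) : Fintype.card A • d = 0 := by
  have hsum : ∑ i, x (i + r) = ∑ i, x i := Fintype.sum_equiv (Equiv.addRight r) _ _ fun _ => rfl
  simp only [hx, Finset.sum_add_distrib, Finset.sum_const, Finset.card_univ] at hsum
  exact add_eq_left.mp hsum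

theorem exists_const_of_forall_add_shift {R : Type*} [Ring R] [NoZeroDivisors R]
    (hA : (Fintype.card A : R) ≠ 0) {x : A → R} (hx : ∀ r, ∃ d, ∀ i, x (i + r) = x i + d) :
    ∃ c, ∀ i, x i = c := by
  refine ⟨x 0, fun r => ?_⟩
  obtain ⟨d, hd⟩ := hx r
  have hd0 : d = 0 := by
    have := card_nsmul_eq_zero_of_add_shift hd
    rw [nsmul_eq_mul] at this
    exact (mul_eq_zero.mp this).resolve_left hA
  simpa [hd0] using hd 0

end ShiftedByConstant

theorem ZMod.natCast_ne_zero_of_prime {p q : ℕ} (hp : p.Prime) (hq : q.Prime) (hpq : p ≠ q) :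
    (p : ZMod q) ≠ 0 := by
  rw [Ne, ZMod.natCast_eq_zero_iff]
  exact fun hdvd => hpq ((Nat.prime_dvd_prime_iff_eq hq hp).mp hdvd).symm

theorem no_move_homogenizes (p q : ℕ) (hp : p.Prime) (hq : q.Prime) (hpq : p ≠ q)
    (x y : Fin p → ZMod q)
    (h : ∀ r : Fin p, ∃ c : ZMod q, ∀ i : Fin p, x (i + r) + y i = c) :
    ∃ c : ZMod q, ∀ i : Fin p, x i = c := by
  have : NeZero p := ⟨hp.ne_zero⟩
  have : Fact q.Prime := ⟨hq⟩
  obtain ⟨c₀, hc₀⟩ := h 0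
  simp only [add_zero] at hc₀
  refine exists_const_of_forall_add_shift (by simpa using ZMod.natCast_ne_zero_of_prime hp hq hpq)
    fun r => ?_
  obtain ⟨c, hc⟩ := h r
  refine ⟨c - c₀, fun i => ?_⟩
  linear_combination hc i - hc₀ i
end
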